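/- (Corollary 3.2: the singularity hypothesis is incompatible with the ETCR.) Let ρ be a positive Borel measure on [0,∞) with total mass ρ([0,∞)) = 1 (the normalization ∫ dρ(m²) = 1 forced by the equal-time canonical commutation relations). Then for every real ω > 2 and every Schwartz function f on ℝ⁴, λ^ω W_{ρ,λ}(f) → 0 as λ → 0⁺; i.e. sd(W_ρ) ≤ 2 and the singularity hypothesis fails. Moreover the atom Z = ρ({m²}) at any point m² satisfies Z ≤ 1. -/

import Mathlib

/-!
Substituting `p ↦ λ p` in the mass-shell integral gives the exact scaling law
`KLinner (f (λ⁻¹ ·)) m² = λ² KLinner f (λ² m²)`. For a fixed Schwartz `f` the inner integral is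
bounded uniformly in `m² ≥ 0`: the point `(√(|p|² + m²), p)` has norm at least `|p|`, so the
integrand is dominated by `D |p|⁻¹ (1 + |p|)⁻³`, which is integrable on `ℝ³`. As `ρ` has finite
mass this gives `|W_{ρ,λ}(f)| ≤ C λ⁻²`, hence `λ^ω W_{ρ,λ}(f) = O(λ^(ω - 2))`.
-/

open MeasureTheory Filter Topology SchwartzMap
open scoped FourierTransform

/-- The point `(p₀, p) ∈ ℝ⁴` built from a time component `p0 ∈ ℝ` and a
space momentum `p ∈ ℝ³`. -/
noncomputable def timeSpace (p0 : ℝ) (p : EuclideanSpace ℝ (Fin 3)) :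
    EuclideanSpace ℝ (Fin 4) :=
  (EuclideanSpace.equiv (Fin 4) ℝ).symm (Fin.cons p0 (EuclideanSpace.equiv (Fin 3) ℝ p))

/-- The inner Källén–Lehmann momentum integral
`∫_{ℝ³} f̂(√(|p|²+m²), p)/√(|p|²+m²) dp` at squared mass `m2 = m²`,
where `f̂ = 𝓕 f` is the Fourier transform of `f`. -/
noncomputable def KLinner (f : EuclideanSpace ℝ (Fin 4) → ℂ) (m2 : ℝ) : ℂ :=
  ∫ p : EuclideanSpace ℝ (Fin 3),
    𝓕 f (timeSpace (Real.sqrt (‖p‖ ^ 2 + m2)) p) / (Real.sqrt (‖p‖ ^ 2 + m2) : ℂ)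

/-- The Källén–Lehmann two-point functional
`W_ρ(f) = ∫_{[0,∞)} (∫_{ℝ³} f̂(√(|p|²+m²), p)/√(|p|²+m²) dp) dρ(m²)`
associated with a spectral measure `ρ` on `[0,∞)`. -/
noncomputable def KL (ρ : Measure ℝ) (f : EuclideanSpace ℝ (Fin 4) → ℂ) : ℂ :=
  ∫ m2 in Set.Ici (0 : ℝ), KLinner f m2 ∂ρ

/-- The scaled Källén–Lehmann functional `W_{ρ,λ}(f) = λ⁻⁴ W_ρ(f(λ⁻¹ ·))`. -/
noncomputable def KLscaled (ρ : Measure ℝ) (lam : ℝ) (f : EuclideanSpace ℝ (Fin 4) → ℂ) : ℂ :=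
  (lam ^ (4 : ℕ) : ℝ)⁻¹ * KL ρ (fun x => f (lam⁻¹ • x))

open Set
open scoped RealInnerProductSpace

theorem SchwartzMap.exists_norm_le_mul_one_add_norm_rpow_neg {E F : Type*}
    [NormedAddCommGroup E] [NormedSpace ℝ E] [NormedAddCommGroup F] [NormedSpace ℝ F]
    (g : 𝓢(E, F)) (k : ℕ) : ∃ C, 0 ≤ C ∧ ∀ x, ‖g x‖ ≤ C * (1 + ‖x‖) ^ (-(k : ℝ)) := by
  refine ⟨2 ^ k * (Finset.Iic (k, 0)).sup (fun m => SchwartzMap.seminorm ℝ m.1 m.2) g,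
    by positivity, fun x => ?_⟩
  have h := one_add_le_sup_seminorm_apply (𝕜 := ℝ) (m := (k, 0)) le_rfl le_rfl g x
  rw [norm_iteratedFDeriv_zero] at h
  rw [Real.rpow_neg (by positivity), Real.rpow_natCast, ← div_eq_mul_inv,
    le_div_iff₀ (by positivity), mul_comm]
  exact h

theorem integrable_norm_inv_mul_one_add_norm_rpow_neg {E : Type*} [NormedAddCommGroup E]
    [NormedSpace ℝ E] [FiniteDimensional ℝ E] [MeasurableSpace E] [BorelSpace E]
    {μ : Measure E} [μ.IsAddHaarMeasure] (hd : 1 < Module.finrank ℝ E) {r : ℝ}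
    (hr : (Module.finrank ℝ E : ℝ) < r + 1) :
    Integrable (fun x : E => ‖x‖⁻¹ * (1 + ‖x‖) ^ (-r)) μ := by
  have hr0 : 0 ≤ r := by
    have : (1 : ℝ) < Module.finrank ℝ E := by exact_mod_cast hd
    linarith
  have hmeas : AEStronglyMeasurable (fun x : E => ‖x‖⁻¹ * (1 + ‖x‖) ^ (-r)) μ := by
    fun_prop
  have hball : IntegrableOn (fun x : E => ‖x‖⁻¹ * (1 + ‖x‖) ^ (-r)) (Metric.ball 0 1) μ := by
    refine integrableOn_ball_of_norm_le_rpow hd.le (C := 1) (α := 1) (by exact_mod_cast hd)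
      (Eventually.of_forall fun x => ?_) hmeas
    rw [Real.rpow_neg_one, one_mul, norm_mul, norm_inv, norm_norm]
    refine mul_le_of_le_one_right (by positivity) ?_
    rw [Real.norm_of_nonneg (by positivity)]
    exact Real.rpow_le_one_of_one_le_of_nonpos (by simp) (by linarith)
  have hfar : IntegrableOn (fun x : E => ‖x‖⁻¹ * (1 + ‖x‖) ^ (-r)) (Metric.ball 0 1)ᶜ μ := by
    refine ((integrable_one_add_norm (μ := μ) hr).const_mul 2).integrableOn.mono'
      hmeas.restrict ?_
    filter_upwards [ae_restrict_mem (measurableSet_ball.compl)] with x hx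
    have hx1 : 1 ≤ ‖x‖ := by simpa using hx
    have hx0 : 0 < ‖x‖ := by linarith
    rw [norm_mul, norm_inv, norm_norm, Real.norm_of_nonneg (by positivity), neg_add,
      Real.rpow_add (by positivity), Real.rpow_neg_one, mul_comm, mul_left_comm]
    gcongr
    rw [inv_le_comm₀ hx0 (by positivity), mul_inv, inv_inv]
    linarith
  simpa using hball.union hfar

theorem Real.fourier_comp_inv_smul {V E : Type*} [NormedAddCommGroup V] [InnerProductSpace ℝ V]
    [MeasurableSpace V] [BorelSpace V] [FiniteDimensional ℝ V]
    [NormedAddCommGroup E] [NormedSpace ℂ E] (f : V → E) {c : ℝ} (hc : 0 < c) (w : V) :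
    𝓕 (fun x => f (c⁻¹ • x)) w = c ^ Module.finrank ℝ V • 𝓕 f (c • w) := by
  have hinner : ∀ x : V, ⟪x, w⟫ = ⟪c⁻¹ • x, c • w⟫ := fun x => by
    rw [real_inner_smul_left, real_inner_smul_right, inv_mul_cancel_left₀ hc.ne']
  simp only [Real.fourier_eq, hinner]
  exact Measure.integral_comp_inv_smul_of_nonneg volume (fun u => 𝐞 (-⟪u, c • w⟫) • f u) hc.le

theorem smul_timeSpace (c a : ℝ) (p : EuclideanSpace ℝ (Fin 3)) :
    c • timeSpace a p = timeSpace (c * a) (c • p) := by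
  ext i
  refine Fin.cases ?_ (fun j => ?_) i <;> rfl

theorem norm_sq_timeSpace (a : ℝ) (p : EuclideanSpace ℝ (Fin 3)) :
    ‖timeSpace a p‖ ^ 2 = a ^ 2 + ‖p‖ ^ 2 := by
  rw [EuclideanSpace.norm_sq_eq, EuclideanSpace.norm_sq_eq, Fin.sum_univ_succ,
    Real.norm_eq_abs, sq_abs]
  rfl

theorem norm_le_norm_timeSpace (a : ℝ) (p : EuclideanSpace ℝ (Fin 3)) :
    ‖p‖ ≤ ‖timeSpace a p‖ :=
  (pow_le_pow_iff_left₀ (norm_nonneg _) (norm_nonneg _) two_ne_zero).1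
    (by rw [norm_sq_timeSpace]; nlinarith)

theorem mul_sqrt_norm_sq_add {E : Type*} [NormedAddCommGroup E] [NormedSpace ℝ E]
    {c : ℝ} (hc : 0 ≤ c) (p : E) (m2 : ℝ) :
    c * √(‖p‖ ^ 2 + m2) = √(‖c • p‖ ^ 2 + c ^ 2 * m2) := by
  rw [norm_smul, Real.norm_of_nonneg hc, mul_pow, ← mul_add, Real.sqrt_mul (sq_nonneg c),
    Real.sqrt_sq hc]

theorem KLinner_comp_inv_smul (f : EuclideanSpace ℝ (Fin 4) → ℂ) {c : ℝ} (hc : 0 < c)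
    (m2 : ℝ) : KLinner (fun x => f (c⁻¹ • x)) m2 = c ^ 2 * KLinner f (c ^ 2 * m2) := by
  set G : EuclideanSpace ℝ (Fin 3) → ℂ := fun q =>
    𝓕 f (timeSpace √(‖q‖ ^ 2 + c ^ 2 * m2) q) / (√(‖q‖ ^ 2 + c ^ 2 * m2) : ℂ)
  have hpoint : ∀ p : EuclideanSpace ℝ (Fin 3),
      𝓕 (fun x => f (c⁻¹ • x)) (timeSpace √(‖p‖ ^ 2 + m2) p) / (√(‖p‖ ^ 2 + m2) : ℂ)
        = (c : ℂ) ^ 5 * G (c • p) := fun p => by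
    simp only [G, ← mul_sqrt_norm_sq_add hc.le, Real.fourier_comp_inv_smul f hc,
      smul_timeSpace, finrank_euclideanSpace_fin, Complex.ofReal_mul, Complex.real_smul,
      Complex.ofReal_pow]
    rw [← div_div, mul_div_assoc']
    congr 1
    field_simp
  have hscale := Measure.integral_comp_smul_of_nonneg volume G c (hR := hc.le)
  simp only [KLinner, hpoint, integral_const_mul, hscale, finrank_euclideanSpace_fin,
    Complex.real_smul]
  push_cast
  field_simp
  rfl

theorem exists_norm_KLinner_le (f : 𝓢(EuclideanSpace ℝ (Fin 4), ℂ)) :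
    ∃ C, ∀ m2, 0 ≤ m2 → ‖KLinner f m2‖ ≤ C := by
  obtain ⟨D, hD0, hD⟩ := (𝓕 f).exists_norm_le_mul_one_add_norm_rpow_neg 3
  push_cast at hD
  have hint : Integrable fun p : EuclideanSpace ℝ (Fin 3) => D * (‖p‖⁻¹ * (1 + ‖p‖) ^ (-(3 : ℝ))) :=
    (integrable_norm_inv_mul_one_add_norm_rpow_neg (by simp) (by norm_num)).const_mul D
  refine ⟨_, fun m2 hm2 => norm_integral_le_of_norm_le hint ?_⟩
  filter_upwards [Measure.ae_ne volume 0] with p hp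
  set a := √(‖p‖ ^ 2 + m2)
  have hpa : ‖p‖ ≤ a := Real.le_sqrt_of_sq_le (by linarith)
  have hdecay : ‖𝓕 (⇑f) (timeSpace a p)‖ ≤ D * (1 + ‖p‖) ^ (-(3 : ℝ)) :=
    (hD _).trans <| mul_le_mul_of_nonneg_left (Real.rpow_le_rpow_of_nonpos (by positivity)
      (by linarith [norm_le_norm_timeSpace a p]) (by norm_num)) hD0
  rw [norm_div, Complex.norm_real, Real.norm_of_nonneg (Real.sqrt_nonneg _)]
  calc ‖𝓕 (⇑f) (timeSpace a p)‖ / a ≤ D * (1 + ‖p‖) ^ (-(3 : ℝ)) / ‖p‖ := by gcongr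
    _ = _ := by ring

theorem norm_KLscaled_le (ρ : Measure ℝ) (hρ : ρ (Ici 0) ≠ ⊤) (f : EuclideanSpace ℝ (Fin 4) → ℂ)
    {C : ℝ} (hC : ∀ m2, 0 ≤ m2 → ‖KLinner f m2‖ ≤ C) {c : ℝ} (hc : 0 < c) :
    ‖KLscaled ρ c f‖ ≤ C * ρ.real (Ici 0) / c ^ 2 := by
  have hKL : ‖KL ρ (fun x => f (c⁻¹ • x))‖ ≤ c ^ 2 * C * ρ.real (Ici 0) := by
    refine norm_setIntegral_le_of_norm_le_const hρ.lt_top fun m2 hm2 => ?_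
    rw [KLinner_comp_inv_smul f hc, norm_mul, norm_pow, Complex.norm_real,
      Real.norm_of_nonneg hc.le]
    exact mul_le_mul_of_nonneg_left (hC _ (mul_nonneg (sq_nonneg c) hm2)) (by positivity)
  rw [KLscaled, norm_mul, Complex.norm_real, Real.norm_of_nonneg (by positivity)]
  calc (c ^ 4)⁻¹ * ‖KL ρ (fun x => f (c⁻¹ • x))‖ ≤ (c ^ 4)⁻¹ * (c ^ 2 * C * ρ.real (Ici 0)) := by
        gcongr
    _ = C * ρ.real (Ici 0) / c ^ 2 := by field_simp

/-- Corollary 3.2: If the spectral measure `ρ` on `[0,∞)` has total mass `1`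
(the ETCR sum rule `∫ dρ(m²) = 1`), then for every `ω > 2` and every Schwartz `f` on ℝ⁴,
`λ^ω W_{ρ,λ}(f) → 0` as `λ → 0⁺` (i.e. `sd(W_ρ) ≤ 2`, the singularity hypothesis fails);
moreover every atom `Z = ρ({m²})` satisfies `Z ≤ 1`. -/
theorem etcr_excludes_singularity (ρ : Measure ℝ)
    (hnorm : ρ (Set.Ici (0 : ℝ)) = 1) :
    (∀ ω : ℝ, 2 < ω → ∀ f : 𝓢(EuclideanSpace ℝ (Fin 4), ℂ),
      Tendsto (fun lam : ℝ => ((lam ^ ω : ℝ) : ℂ) * KLscaled ρ lam ⇑f)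
        (𝓝[>] (0 : ℝ)) (𝓝 0)) ∧
    ∀ msq : ℝ, 0 ≤ msq → ρ {msq} ≤ 1 := by
  refine ⟨fun ω hω f => ?_, fun msq hmsq => (measure_mono (by simpa using hmsq)).trans hnorm.le⟩
  obtain ⟨C, hC⟩ := exists_norm_KLinner_le f
  have hρ : ρ.real (Ici 0) = 1 := by simp [measureReal_def, hnorm]
  have hpow : Tendsto (fun lam : ℝ => lam ^ (ω - 2)) (𝓝[>] 0) (𝓝 0) := by
    simpa [Real.zero_rpow (by linarith : ω - 2 ≠ 0)] using
      ((Real.continuousAt_rpow_const 0 (ω - 2) (Or.inr (by linarith))).tendsto.mono_left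
        nhdsWithin_le_nhds)
  refine squeeze_zero_norm' ?_ (by simpa using hpow.const_mul C)
  filter_upwards [self_mem_nhdsWithin] with lam (hlam : 0 < lam)
  have hbound := norm_KLscaled_le ρ (by simp [hnorm]) f hC hlam
  rw [hρ, mul_one] at hbound
  rw [norm_mul, Complex.norm_real, Real.norm_of_nonneg (by positivity), Real.rpow_sub hlam,
    Real.rpow_two]
  calc lam ^ ω * ‖KLscaled ρ lam ⇑f‖ ≤ lam ^ ω * (C / lam ^ 2) := by gcongr
    _ = C * (lam ^ ω / lam ^ 2) := by ring
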